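/- Let a(x₁,x₂) = (1+x₁)⁻²(1+x₂)⁻² on (0,∞)², Mᵉ = {x ∈ (0,∞)² : x₂ ≤ ε·x₁}, and K = [0,C]² for a fixed C > 0. Then for 0 < ε < 1, the ratio (∫_{Mᵉ ∩ Kᶜ} a dx)/(∫_{Mᵉ} a dx) = [1 − ε − (1+C)·log((1+Cε)/(ε+Cε))] / [(1+C)(1 − ε + log ε)], and this ratio tends to 1 as ε ↓ 0. Consequently, the family of normalized restrictions Pᵉ of a to Mᵉ is not tight. -/

import Mathlib

open MeasureTheory Real Set Filter
open scoped Topology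

/-! By Fubini, the mass of `a` on the part `{x₁ > c}` of `Mᵉ` is the one-variable integral
`∫_c^∞ (1+x)⁻² (1 - (1+εx)⁻¹) dx`, which has an elementary primitive. For `ε ≤ 1` the part of `Mᵉ`
outside `[0,C]²` is exactly `{x₁ > C}`, which gives the closed form of the ratio. Its denominator
behaves like `(1+C) log ε → -∞` while numerator minus denominator stays bounded, so the ratio tends
to `1`, i.e. `Pᵉ([0,C]²) → 0`. A compact set lies, up to the `Pᵉ`-null set `(Mᵉ)ᶜ`, in such a
square, so it cannot carry mass `1/2` for all `ε`. -/

/-- The Pareto(1) × Pareto(1) ambient density a(x₁,x₂) = (1+x₁)⁻²(1+x₂)⁻². -/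
noncomputable def paretoDensity (x : ℝ × ℝ) : ℝ := (1 + x.1)⁻¹ ^ 2 * (1 + x.2)⁻¹ ^ 2

/-- The sublevel set Mᵉ = {(x₁,x₂) ∈ (0,∞)² : x₂ ≤ ε·x₁}. -/
def coneSublevel (ε : ℝ) : Set (ℝ × ℝ) :=
  {x : ℝ × ℝ | 0 < x.1 ∧ 0 < x.2 ∧ x.2 ≤ ε * x.1}

/-- The normalized restriction Pᵉ of the density a to Mᵉ. -/
noncomputable def Pcone (ε : ℝ) : Measure (ℝ × ℝ) :=
  (∫⁻ x in coneSublevel ε, ENNReal.ofReal (paretoDensity x))⁻¹ •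
    ((volume : Measure (ℝ × ℝ)).restrict (coneSublevel ε)).withDensity
      (fun x => ENNReal.ofReal (paretoDensity x))

lemma hasDerivAt_neg_inv_one_add {y : ℝ} (hy : 1 + y ≠ 0) :
    HasDerivAt (fun t : ℝ => -(1 + t)⁻¹) ((1 + y)⁻¹ ^ 2) y :=
  (((hasDerivAt_id' y).const_add 1).inv hy).neg.congr_deriv (by field_simp)

lemma integral_Ioc_inv_one_add_sq {b : ℝ} (hb : 0 ≤ b) :
    ∫ y in Ioc 0 b, (1 + y)⁻¹ ^ 2 = 1 - (1 + b)⁻¹ := by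
  have hpos : ∀ y ∈ uIcc 0 b, 1 + y ≠ 0 := fun y hy => by
    rw [uIcc_of_le hb] at hy; linarith [hy.1]
  rw [← intervalIntegral.integral_of_le hb, intervalIntegral.integral_eq_sub_of_hasDerivAt
    (fun y hy => hasDerivAt_neg_inv_one_add (hpos y hy))
    (((continuousOn_const.add continuousOn_id).inv₀ hpos).pow 2).intervalIntegrable]
  norm_num
  ring

lemma integrableOn_Ioi_inv_one_add_sq : IntegrableOn (fun x : ℝ => (1 + x)⁻¹ ^ 2) (Ioi 0) := by
  refine integrableOn_Ioi_deriv_of_nonneg' (l := -0)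
    (fun x hx => hasDerivAt_neg_inv_one_add (by linarith [mem_Ici.mp hx]))
    (fun x _ => by positivity) ?_
  exact (tendsto_inv_atTop_zero.comp (tendsto_atTop_add_const_left _ 1 tendsto_id)).neg

lemma hasDerivAt_coneStrip_primitive {ε x : ℝ} (hε : ε ≠ 1) (hx : 1 + x ≠ 0)
    (hεx : 1 + ε * x ≠ 0) :
    HasDerivAt
      (fun t => ε / (1 - ε) ^ 2 * (log (1 + t) - log (1 + ε * t)) + ε / (1 - ε) * (1 + t)⁻¹)
      ((1 + x)⁻¹ ^ 2 * (1 - (1 + ε * x)⁻¹)) x := by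
  have hlog₁ := ((hasDerivAt_id' x).const_add 1).log hx
  have hlog₂ := (((hasDerivAt_id' x).const_mul ε).const_add 1).log hεx
  have hinv := ((hasDerivAt_id' x).const_add 1).inv hx
  refine (((hlog₁.sub hlog₂).const_mul (ε / (1 - ε) ^ 2)).add
    (hinv.const_mul (ε / (1 - ε)))).congr_deriv ?_
  have : 1 - ε ≠ 0 := sub_ne_zero.mpr hε.symm
  field_simp
  ring

lemma tendsto_log_one_add_sub_log_one_add_mul {ε : ℝ} (hε : 0 < ε) :
    Tendsto (fun t => log (1 + t) - log (1 + ε * t)) atTop (𝓝 (-log ε)) := by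
  have hinv : Tendsto (fun t => (1 + ε * t)⁻¹) atTop (𝓝 0) :=
    tendsto_inv_atTop_zero.comp
      (tendsto_atTop_add_const_left _ 1 (tendsto_id.const_mul_atTop hε))
  -- `(1 + t) / (1 + ε t) = ε⁻¹ - (ε⁻¹ - 1) (1 + ε t)⁻¹ → ε⁻¹`
  have hquot := ((hinv.const_mul (ε⁻¹ - 1)).const_sub ε⁻¹).log (by simp [hε.ne'])
  rw [mul_zero, sub_zero, log_inv] at hquot
  refine hquot.congr' ?_
  filter_upwards [eventually_ge_atTop 0] with t ht
  have h₁ : 0 < 1 + t := by linarith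
  have h₂ : 0 < 1 + ε * t := by positivity
  rw [← log_div h₁.ne' h₂.ne']
  congr 1
  field_simp
  ring

noncomputable def coneStripMass (ε c : ℝ) : ℝ :=
  ε / (1 - ε) ^ 2 * (log ((1 + c * ε) / (ε + c * ε)) - (1 - ε) / (1 + c))

lemma coneStripMass_zero (ε : ℝ) :
    coneStripMass ε 0 = -(ε / (1 - ε) ^ 2) * (1 - ε + log ε) := by
  simp only [coneStripMass, zero_mul, add_zero, div_one, one_div, log_inv]
  ring

lemma coneStripMass_zero_pos {ε : ℝ} (hε : 0 < ε) (hε1 : ε < 1) : 0 < coneStripMass ε 0 := by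
  have hlog : log ε < ε - 1 := log_lt_sub_one_of_pos hε hε1.ne
  have h1ε : 0 < 1 - ε := by linarith
  rw [coneStripMass_zero, neg_mul_comm]
  exact mul_pos (by positivity) (by linarith)

lemma integral_Ioi_eq_coneStripMass {ε c : ℝ} (hε : 0 < ε) (hε1 : ε ≠ 1) (hc : 0 ≤ c) :
    ∫ x in Ioi c, (1 + x)⁻¹ ^ 2 * (1 - (1 + ε * x)⁻¹) = coneStripMass ε c := by
  have hderiv : ∀ x ∈ Ici c, HasDerivAt
      (fun t => ε / (1 - ε) ^ 2 * (log (1 + t) - log (1 + ε * t)) + ε / (1 - ε) * (1 + t)⁻¹)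
      ((1 + x)⁻¹ ^ 2 * (1 - (1 + ε * x)⁻¹)) x := fun x hx => by
    have : 0 ≤ x := hc.trans hx
    exact hasDerivAt_coneStrip_primitive hε1 (by positivity) (by positivity)
  have hnonneg : ∀ x ∈ Ioi c, 0 ≤ (1 + x)⁻¹ ^ 2 * (1 - (1 + ε * x)⁻¹) := fun x hx => by
    have : 0 ≤ x := hc.trans (le_of_lt hx)
    have : (1 + ε * x)⁻¹ ≤ 1 := inv_le_one_of_one_le₀ (by nlinarith)
    exact mul_nonneg (by positivity) (by linarith)
  have hlim := ((tendsto_log_one_add_sub_log_one_add_mul hε).const_mul (ε / (1 - ε) ^ 2)).add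
    ((tendsto_inv_atTop_zero.comp (tendsto_atTop_add_const_left _ 1 tendsto_id)).const_mul
      (ε / (1 - ε)))
  rw [integral_Ioi_of_hasDerivAt_of_nonneg' hderiv hnonneg hlim, coneStripMass,
    show ε + c * ε = ε * (1 + c) by ring, log_div (by positivity) (by positivity),
    log_mul hε.ne' (by positivity), mul_comm c ε]
  have : 1 - ε ≠ 0 := sub_ne_zero.mpr hε1.symm
  field_simp
  ring

def coneStrip (ε c : ℝ) : Set (ℝ × ℝ) :=
  {p : ℝ × ℝ | c < p.1 ∧ 0 < p.2 ∧ p.2 ≤ ε * p.1}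

lemma coneSublevel_eq_coneStrip (ε : ℝ) : coneSublevel ε = coneStrip ε 0 := rfl

lemma measurableSet_coneStrip (ε c : ℝ) : MeasurableSet (coneStrip ε c) :=
  (measurableSet_lt measurable_const measurable_fst).inter
    ((measurableSet_lt measurable_const measurable_snd).inter
      (measurableSet_le measurable_snd (measurable_fst.const_mul ε)))

lemma coneStrip_subset {ε c : ℝ} (hc : 0 ≤ c) : coneStrip ε c ⊆ Ioi 0 ×ˢ Ioi 0 :=
  fun _ ⟨h₁, h₂, _⟩ => ⟨hc.trans_lt h₁, h₂⟩

lemma paretoDensity_nonneg (x : ℝ × ℝ) : 0 ≤ paretoDensity x := by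
  unfold paretoDensity; positivity

lemma integrableOn_paretoDensity : IntegrableOn paretoDensity (Ioi 0 ×ˢ Ioi 0) := by
  have h := integrableOn_Ioi_inv_one_add_sq.mul_prod integrableOn_Ioi_inv_one_add_sq
  rwa [Measure.prod_restrict, ← Measure.volume_eq_prod] at h

lemma measurableSet_coneSublevel (ε : ℝ) : MeasurableSet (coneSublevel ε) :=
  measurableSet_coneStrip ε 0

lemma integrableOn_coneSublevel (ε : ℝ) : IntegrableOn paretoDensity (coneSublevel ε) :=
  integrableOn_paretoDensity.mono_set (coneStrip_subset le_rfl)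

lemma integral_coneStrip {ε c : ℝ} (hε : 0 < ε) (hε1 : ε ≠ 1) (hc : 0 ≤ c) :
    ∫ p in coneStrip ε c, paretoDensity p = coneStripMass ε c := by
  have hint : Integrable ((coneStrip ε c).indicator paretoDensity) (volume.prod volume) := by
    rw [← Measure.volume_eq_prod, integrable_indicator_iff (measurableSet_coneStrip ε c)]
    exact integrableOn_paretoDensity.mono_set (coneStrip_subset hc)
  have hslice : ∀ x, ∫ y, (coneStrip ε c).indicator paretoDensity (x, y) =
      (Ioi c).indicator (fun x => (1 + x)⁻¹ ^ 2 * (1 - (1 + ε * x)⁻¹)) x := fun x => by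
    by_cases hx : c < x
    · have hfiber : (fun y => (coneStrip ε c).indicator paretoDensity (x, y)) =
          (Ioc 0 (ε * x)).indicator (fun y => (1 + x)⁻¹ ^ 2 * (1 + y)⁻¹ ^ 2) := by
        ext y
        simp [indicator, coneStrip, paretoDensity, hx]
      rw [hfiber, integral_indicator measurableSet_Ioc, integral_const_mul,
        integral_Ioc_inv_one_add_sq (by nlinarith), indicator_of_mem (show x ∈ Ioi c from hx)]
    · simp [indicator, coneStrip, hx]
  rw [← integral_indicator (measurableSet_coneStrip ε c), Measure.volume_eq_prod,
    integral_prod _ hint]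
  simp_rw [hslice]
  rw [integral_indicator measurableSet_Ioi, integral_Ioi_eq_coneStripMass hε hε1 hc]

lemma coneSublevel_inter_compl_square {ε C : ℝ} (hε1 : ε ≤ 1) (hC : 0 ≤ C) :
    coneSublevel ε ∩ (Icc 0 C ×ˢ Icc 0 C)ᶜ = coneStrip ε C := by
  ext ⟨x, y⟩
  simp only [coneSublevel, coneStrip, mem_inter_iff, mem_ofPred_eq, mem_compl_iff, mem_prod,
    mem_Icc, not_and, not_le]
  constructor
  · rintro ⟨⟨hx, hy, hyx⟩, hout⟩
    refine ⟨?_, hy, hyx⟩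
    by_contra! hxC
    have : y ≤ x := hyx.trans (mul_le_of_le_one_left hx.le hε1)
    exact (hout ⟨hx.le, hxC⟩ hy.le).not_ge (this.trans hxC)
  · rintro ⟨hx, hy, hyx⟩
    exact ⟨⟨hC.trans_lt hx, hy, hyx⟩, fun h => absurd h.2 (not_le.mpr hx)⟩

noncomputable def outsideSquareRatio (C ε : ℝ) : ℝ :=
  (∫ x in coneSublevel ε ∩ (Icc 0 C ×ˢ Icc 0 C)ᶜ, paretoDensity x) /
    ∫ x in coneSublevel ε, paretoDensity x

lemma outsideSquareRatio_eq {C ε : ℝ} (hC : 0 ≤ C) (hε : 0 < ε) (hε1 : ε < 1) :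
    outsideSquareRatio C ε =
      (1 - ε - (1 + C) * log ((1 + C * ε) / (ε + C * ε))) / ((1 + C) * (1 - ε + log ε)) := by
  have hlog : log ε < ε - 1 := log_lt_sub_one_of_pos hε hε1.ne
  have h1ε : 1 - ε ≠ 0 := by linarith
  have hden : 1 - ε + log ε ≠ 0 := by linarith
  rw [outsideSquareRatio, coneSublevel_inter_compl_square hε1.le hC, coneSublevel_eq_coneStrip,
    integral_coneStrip hε hε1.ne hC, integral_coneStrip hε hε1.ne le_rfl, coneStripMass_zero,
    coneStripMass]
  field_simp
  ring

lemma tendsto_outsideSquareRatio {C : ℝ} (hC : 0 ≤ C) :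
    Tendsto (outsideSquareRatio C) (𝓝[>] 0) (𝓝 1) := by
  set N : ℝ → ℝ := fun ε => -(C * (1 - ε)) - (1 + C) * log ((1 + C * ε) / (1 + C))
  set D : ℝ → ℝ := fun ε => (1 + C) * (1 - ε + log ε)
  have hN : Tendsto N (𝓝[>] 0) (𝓝 (N 0)) :=
    (show ContinuousAt N 0 by fun_prop (disch := positivity)).tendsto.mono_left
      nhdsWithin_le_nhds
  have hD : Tendsto D (𝓝[>] 0) atBot :=
    ((tendsto_const_nhds.sub (tendsto_id.mono_left nhdsWithin_le_nhds)).add_atBot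
      tendsto_log_nhdsGT_zero).const_mul_atBot (by positivity)
  -- the numerator of the closed form is `D + N`, with `N` bounded and `D → -∞`
  have hlim := (hN.div_atBot hD).const_add 1
  rw [add_zero] at hlim
  refine hlim.congr' ?_
  filter_upwards [Ioo_mem_nhdsGT one_pos] with ε ⟨hε, hε1⟩
  have hD0 : D ε ≠ 0 := mul_ne_zero (by positivity) (by linarith [log_lt_sub_one_of_pos hε hε1.ne])
  rw [outsideSquareRatio_eq hC hε hε1, one_add_div hD0,
    show (1 + C * ε) / (ε + C * ε) = (1 + C * ε) / (1 + C) / ε by rw [div_div]; ring_nf,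
    log_div (by positivity) hε.ne']
  simp only [N, D]
  ring

lemma integral_coneSublevel_pos {ε : ℝ} (hε : 0 < ε) (hε1 : ε < 1) :
    0 < ∫ x in coneSublevel ε, paretoDensity x := by
  rw [coneSublevel_eq_coneStrip, integral_coneStrip hε hε1.ne le_rfl]
  exact coneStripMass_zero_pos hε hε1

lemma Pcone_apply {ε : ℝ} (hε : 0 < ε) (hε1 : ε < 1) {S : Set (ℝ × ℝ)} (hS : MeasurableSet S) :
    Pcone ε S = ENNReal.ofReal
      ((∫ x in coneSublevel ε ∩ S, paretoDensity x) / ∫ x in coneSublevel ε, paretoDensity x) := by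
  rw [Pcone, Measure.smul_apply, withDensity_apply _ hS, Measure.restrict_restrict hS,
    ← ofReal_integral_eq_lintegral_ofReal (integrableOn_coneSublevel ε)
      (ae_of_all _ paretoDensity_nonneg),
    ← ofReal_integral_eq_lintegral_ofReal ((integrableOn_coneSublevel ε).mono_set
      inter_subset_right) (ae_of_all _ paretoDensity_nonneg),
    ENNReal.ofReal_div_of_pos (integral_coneSublevel_pos hε hε1), smul_eq_mul,
    ENNReal.div_eq_inv_mul, inter_comm]

lemma Pcone_compl_coneSublevel {ε : ℝ} (hε : 0 < ε) (hε1 : ε < 1) :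
    Pcone ε (coneSublevel ε)ᶜ = 0 := by
  rw [Pcone_apply hε hε1 (measurableSet_coneSublevel ε).compl, inter_compl_self,
    Measure.restrict_empty, integral_zero_measure, zero_div, ENNReal.ofReal_zero]

lemma Pcone_square_eq {C ε : ℝ} (hε : 0 < ε) (hε1 : ε < 1) :
    Pcone ε (Icc 0 C ×ˢ Icc 0 C) = ENNReal.ofReal (1 - outsideSquareRatio C ε) := by
  have hsquare : MeasurableSet (Icc 0 C ×ˢ Icc 0 C) := measurableSet_Icc.prod measurableSet_Icc
  rw [Pcone_apply hε hε1 hsquare, outsideSquareRatio]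
  congr 1
  rw [eq_sub_iff_add_eq, ← add_div, ← sdiff_eq,
    integral_inter_add_sdiff hsquare (integrableOn_coneSublevel ε),
    div_self (integral_coneSublevel_pos hε hε1).ne']

lemma tendsto_Pcone_square {C : ℝ} (hC : 0 ≤ C) :
    Tendsto (fun ε => Pcone ε (Icc 0 C ×ˢ Icc 0 C)) (𝓝[>] 0) (𝓝 0) := by
  have hlim := ENNReal.tendsto_ofReal ((tendsto_outsideSquareRatio hC).const_sub 1)
  rw [sub_self, ENNReal.ofReal_zero] at hlim
  refine hlim.congr' ?_
  filter_upwards [Ioo_mem_nhdsGT one_pos] with ε ⟨hε, hε1⟩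
  exact (Pcone_square_eq hε hε1).symm

lemma Bornology.IsBounded.exists_Pcone_le_Pcone_square {K : Set (ℝ × ℝ)}
    (hK : Bornology.IsBounded K) : ∃ C, 0 ≤ C ∧ ∀ ε, 0 < ε → ε < 1 →
      Pcone ε K ≤ Pcone ε (Icc 0 C ×ˢ Icc 0 C) := by
  obtain ⟨C, hC⟩ := isBounded_iff_forall_norm_le.mp hK
  refine ⟨max C 0, le_max_right _ _, fun ε hε hε1 => ?_⟩
  have hsub : K ⊆ Icc 0 (max C 0) ×ˢ Icc 0 (max C 0) ∪ (coneSublevel ε)ᶜ := by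
    intro p hp
    by_cases hpM : p ∈ coneSublevel ε
    · have h₁ : |p.1| ≤ max C 0 := le_max_of_le_left ((norm_fst_le p).trans (hC p hp))
      have h₂ : |p.2| ≤ max C 0 := le_max_of_le_left ((norm_snd_le p).trans (hC p hp))
      exact Or.inl ⟨⟨hpM.1.le, (le_abs_self _).trans h₁⟩, ⟨hpM.2.1.le, (le_abs_self _).trans h₂⟩⟩
    · exact Or.inr hpM
  calc Pcone ε K ≤ Pcone ε (Icc 0 (max C 0) ×ˢ Icc 0 (max C 0)) + Pcone ε (coneSublevel ε)ᶜ :=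
        (measure_mono hsub).trans (measure_union_le _ _)
    _ = Pcone ε (Icc 0 (max C 0) ×ˢ Icc 0 (max C 0)) := by
        rw [Pcone_compl_coneSublevel hε hε1, add_zero]

/-- The mass of a on Mᵉ outside the compact square [0,C]², the explicit formula for its ratio
to the total mass on Mᵉ, the fact that the ratio tends to 1 as ε ↓ 0, and the resulting
failure of tightness of the family {Pᵉ}. -/
theorem pareto_cone_not_tight :
    (∀ C : ℝ, 0 < C → ∀ ε : ℝ, 0 < ε → ε < 1 →
      (∫ x in coneSublevel ε ∩ (Set.Icc (0:ℝ) C ×ˢ Set.Icc (0:ℝ) C)ᶜ, paretoDensity x) /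
          (∫ x in coneSublevel ε, paretoDensity x) =
        (1 - ε - (1 + C) * Real.log ((1 + C * ε) / (ε + C * ε))) /
          ((1 + C) * (1 - ε + Real.log ε))) ∧
    (∀ C : ℝ, 0 < C →
      Tendsto (fun ε : ℝ =>
          (∫ x in coneSublevel ε ∩ (Set.Icc (0:ℝ) C ×ˢ Set.Icc (0:ℝ) C)ᶜ, paretoDensity x) /
            (∫ x in coneSublevel ε, paretoDensity x))
        (nhdsWithin 0 (Set.Ioi 0)) (nhds 1)) ∧
    ¬ (∀ δ : ℝ, 0 < δ → ∃ K : Set (ℝ × ℝ), IsCompact K ∧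
        ∀ ε : ℝ, 0 < ε → ε < 1 → 1 - ENNReal.ofReal δ ≤ Pcone ε K) := by
  refine ⟨fun C hC ε hε hε1 => outsideSquareRatio_eq hC.le hε hε1,
    fun C hC => tendsto_outsideSquareRatio hC.le, fun htight => ?_⟩
  obtain ⟨K, hK, hPK⟩ := htight (1 / 2) one_half_pos
  obtain ⟨C, hC, hKC⟩ := hK.isBounded.exists_Pcone_le_Pcone_square
  have hgap : 0 < 1 - ENNReal.ofReal (1 / 2) :=
    tsub_pos_of_lt (ENNReal.ofReal_lt_one.mpr one_half_lt_one)
  obtain ⟨ε, hsmall, hε, hε1⟩ :=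
    (((tendsto_Pcone_square hC).eventually (gt_mem_nhds hgap)).and
      (Ioo_mem_nhdsGT one_pos)).exists
  exact (hPK ε hε hε1).not_gt ((hKC ε hε hε1).trans_lt hsmall)
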